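/- The elliptic curve over Q defined by y^2 = x^3 - 15x + 22 has Mordell–Weil rank 0 and its torsion subgroup over Q has order 6. -/

import Mathlib

lemma zmod3_aux : ∀ c q : ZMod 3, c^2 = -q^4 → c = 0 ∧ q = 0 := by decide

lemma killK {c p q : ℤ} (hpq : IsCoprime p q) (h : c^2 = 3*p^4+6*p^2*q^2-q^4) : False := by
  have h3 : ((c : ZMod 3))^2 = -((q : ZMod 3))^4 := by
    have h30 : (3 : ZMod 3) = 0 := by decide
    have hc := congrArg (fun z : ℤ => (z : ZMod 3)) h
    push_cast at hc
    linear_combination hc + ((p:ZMod 3)^4 + 2*(p:ZMod 3)^2*(q:ZMod 3)^2) * h30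
  obtain ⟨hc0, hq0⟩ := zmod3_aux _ _ h3
  have hcd : (3:ℤ) ∣ c := by
    rwa [ZMod.intCast_zmod_eq_zero_iff_dvd] at hc0
  have hqd : (3:ℤ) ∣ q := by
    rwa [ZMod.intCast_zmod_eq_zero_iff_dvd] at hq0
  obtain ⟨c₁, rfl⟩ := hcd
  obtain ⟨q₁, rfl⟩ := hqd
  have h9 : (9:ℤ) ∣ 3*p^4 := ⟨c₁^2 - 6*p^2*q₁^2 + 9*q₁^4, by linear_combination -h⟩
  obtain ⟨k, hk⟩ := h9
  have hp4 : (3:ℤ) ∣ p^4 := ⟨k, by linarith⟩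
  have hp : (3:ℤ) ∣ p := Int.Prime.dvd_pow' (by norm_num) hp4
  obtain ⟨x, y, hxy⟩ := hpq
  have : (3:ℤ) ∣ 1 := by
    rw [← hxy]
    exact dvd_add (Dvd.dvd.mul_left hp x) (Dvd.dvd.mul_left ⟨q₁, rfl⟩ y)
  norm_num at this


-- positive x with x = c² or x = -c² gives x = |c|², with |c| > 0
lemma pos_sq {x c : ℤ} (hx : 0 < x) (h : x = c^2 ∨ x = -c^2) : x = |c|^2 ∧ 0 < |c| := by
  have hc2 : |c|^2 = c^2 := sq_abs c
  rcases h with h | h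
  · refine ⟨by rw [hc2, ← h], ?_⟩
    rcases eq_or_ne c 0 with rfl | hc
    · simp at h; omega
    · exact abs_pos.mpr hc
  · nlinarith [sq_nonneg c]

lemma fourth_of_coprime {x y e : ℤ} (hx : 0 < x) (hy : 0 < y) (h : IsCoprime x y)
    (he : x * y = e^4) : ∃ a b : ℤ, x = a^4 ∧ y = b^4 ∧ e^2 = a^2*b^2 := by
  have he' : x * y = (e^2)^2 := by linear_combination he
  obtain ⟨c0, hc0⟩ := Int.sq_of_isCoprime h he'
  obtain ⟨hc, hcpos⟩ := pos_sq hx hc0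
  have hyx : y * x = (e^2)^2 := by linear_combination he'
  obtain ⟨d0, hd0⟩ := Int.sq_of_isCoprime h.symm hyx
  obtain ⟨hd, hdpos⟩ := pos_sq hy hd0
  set c := |c0| with hcdef
  set d := |d0| with hddef
  have hcd : c * d = e^2 := by
    have h1 : (c*d)^2 = (e^2)^2 := by rw [mul_pow, ← hc, ← hd]; linarith [he']
    have h2 : 0 < c * d := mul_pos hcpos hdpos
    nlinarith [sq_nonneg (c*d - e^2), sq_nonneg (c*d + e^2), sq_nonneg e]
  have hco_cd : IsCoprime c d := by
    have : IsCoprime (c^2) (d^2) := by rw [← hc, ← hd]; exact h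
    exact IsCoprime.of_isCoprime_of_dvd_right
      (IsCoprime.of_isCoprime_of_dvd_left this (dvd_pow_self c two_ne_zero))
      (dvd_pow_self d two_ne_zero)
  obtain ⟨a0, ha0⟩ := Int.sq_of_isCoprime hco_cd hcd
  obtain ⟨ha, _⟩ := pos_sq hcpos ha0
  have hdc : d * c = e^2 := by rw [mul_comm]; exact hcd
  obtain ⟨b0, hb0⟩ := Int.sq_of_isCoprime hco_cd.symm hdc
  obtain ⟨hb, _⟩ := pos_sq hdpos hb0
  refine ⟨|a0|, |b0|, ?_, ?_, ?_⟩
  · rw [hc, ha]; ring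
  · rw [hd, hb]; ring
  · rw [← hcd, ha, hb]
lemma factor3 {r s e : ℤ} (hr : 0 < r) (hs : 0 < s) (h : IsCoprime r s)
    (he : r * s = 3 * e^4) (h3 : (3:ℤ) ∣ r) :
    ∃ a b : ℤ, r = 3*a^4 ∧ s = b^4 ∧ e^2 = a^2*b^2 ∧ IsCoprime a b ∧ a ≠ 0 ∧ b ≠ 0 := by
  obtain ⟨r₁, rfl⟩ := h3
  have hr₁ : 0 < r₁ := by nlinarith
  have he₁ : r₁ * s = e^4 := by linarith
  have hco₁ : IsCoprime r₁ s := IsCoprime.of_isCoprime_of_dvd_left h ⟨3, by ring⟩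
  obtain ⟨a, b, hA, hB, hE⟩ := fourth_of_coprime hr₁ hs hco₁ he₁
  have hco_ab : IsCoprime a b := by
    have : IsCoprime (a^4) (b^4) := by rw [← hA, ← hB]; exact hco₁
    exact IsCoprime.of_isCoprime_of_dvd_right
      (IsCoprime.of_isCoprime_of_dvd_left this (dvd_pow_self a (by norm_num)))
      (dvd_pow_self b (by norm_num))
  refine ⟨a, b, by rw [hA], hB, hE, hco_ab, ?_, ?_⟩
  · rintro rfl; simp at hA; omega
  · rintro rfl; simp at hB; omega


lemma not_coprime_of_common {u e p : ℤ} (hp : 2 ≤ p) (h1 : p ∣ u) (h2 : p ∣ e) :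
    ¬ IsCoprime u e := by
  intro h
  obtain ⟨x, y, hxy⟩ := h
  have hd : p ∣ 1 := by
    rw [← hxy]
    exact dvd_add (h1.mul_left x) (h2.mul_left y)
  have := Int.le_of_dvd one_pos hd
  omega

lemma exists_common_prime {r s : ℤ} (h : ¬ IsCoprime r s) (hr : r ≠ 0) :
    ∃ p : ℕ, p.Prime ∧ (p:ℤ) ∣ r ∧ (p:ℤ) ∣ s := by
  rw [Int.isCoprime_iff_gcd_eq_one] at h
  obtain ⟨p, hp, hpd⟩ := Nat.exists_prime_and_dvd h
  have h1 : ((Int.gcd r s : ℕ) : ℤ) ∣ r := Int.gcd_dvd_left r s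
  have h2 : ((Int.gcd r s : ℕ) : ℤ) ∣ s := Int.gcd_dvd_right r s
  have hpz : (p:ℤ) ∣ (Int.gcd r s : ℕ) := Int.natCast_dvd_natCast.mpr hpd
  exact ⟨p, hp, hpz.trans h1, hpz.trans h2⟩

lemma natAbs_lt_iff_sq_lt {p e : ℤ} : p.natAbs < e.natAbs ↔ p^2 < e^2 := by
  constructor
  · intro h
    have h' : (p.natAbs:ℤ) < e.natAbs := by exact_mod_cast h
    nlinarith [Int.natAbs_sq p, Int.natAbs_sq e, Int.natCast_nonneg p.natAbs, Int.natCast_nonneg e.natAbs]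
  · intro h
    by_contra hc
    push_neg at hc
    have h' : (e.natAbs:ℤ) ≤ p.natAbs := by exact_mod_cast hc
    nlinarith [Int.natAbs_sq p, Int.natAbs_sq e, Int.natCast_nonneg p.natAbs, Int.natCast_nonneg e.natAbs]


lemma nine_dvd_trick {a b U u : ℤ} (hu : u^2 = 3*a^4 - 3*a^2*b^2 + b^4) (hU2 : U^2 = u^2)
    (h3U : (3:ℤ) ∣ U) (h3b : (3:ℤ) ∣ b) : (3:ℤ) ∣ a := by
  obtain ⟨U₁, rfl⟩ := h3U
  obtain ⟨b₁, rfl⟩ := h3b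
  have h9 : (9:ℤ) ∣ 3*a^4 := ⟨U₁^2 + 3*a^2*b₁^2 - 9*b₁^4, by linear_combination -hU2 - hu⟩
  obtain ⟨k9, hk9⟩ := h9
  have h3a4 : (3:ℤ) ∣ a^4 := ⟨k9, by linarith⟩
  exact (by norm_num : Prime (3:ℤ)).dvd_of_dvd_pow h3a4

lemma Q2step {a b u : ℤ} (hco : IsCoprime a b) (ha : a ≠ 0) (hb : b ≠ 0)
    (hu : u^2 = 3*a^4 - 3*a^2*b^2 + b^4) :
    ∃ p q : ℤ, IsCoprime p q ∧ p ≠ 0 ∧ q ≠ 0 ∧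
      ((a^2 = p^2*q^2 ∧ (2*b)^2 = q^4 + 6*q^2*p^2 - 3*p^4) ∨
       (a^2 = 4*(p^2*q^2) ∧ b^2 = q^4 + 6*q^2*p^2 - 3*p^4)) := by
  have hp3int : Prime (3:ℤ) := by norm_num
  have hp2int : Prime (2:ℤ) := by norm_num
  have ha4 : (0:ℤ) < a^4 := by positivity
  have hu0 : u ≠ 0 := by
    intro h0
    rw [h0] at hu
    nlinarith [sq_nonneg (2*b^2 - 3*a^2)]
  obtain ⟨U, hU2, hUpos⟩ : ∃ U : ℤ, U^2 = u^2 ∧ 0 < U :=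
    ⟨|u|, sq_abs u, abs_pos.mpr hu0⟩
  have key : (2*U - (2*b^2-3*a^2)) * (2*U + (2*b^2-3*a^2)) = 3*a^4 := by
    linear_combination 4*hU2 + 4*hu
  have hprodpos : (0:ℤ) < (2*U - (2*b^2-3*a^2)) * (2*U + (2*b^2-3*a^2)) := by
    rw [key]; positivity
  obtain ⟨hr2, hs2⟩ : 0 < 2*U - (2*b^2-3*a^2) ∧ 0 < 2*U + (2*b^2-3*a^2) := by
    rcases mul_pos_iff.mp hprodpos with h | h
    · exact h
    · exfalso; obtain ⟨h1, h2⟩ := h; linarith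
  rcases Int.even_or_odd a with haeven | haodd
  · -- a even
    obtain ⟨a₀, rfl⟩ : ∃ a₀, a = 2*a₀ := by
      obtain ⟨a₀, h⟩ := haeven; exact ⟨a₀, by omega⟩
    have ha₀ : a₀ ≠ 0 := by simpa using ha
    have h2a : (2:ℤ) ∣ 2*a₀ := ⟨a₀, rfl⟩
    have hbodd : ¬ (2:ℤ) ∣ b := fun h => not_coprime_of_common (le_refl 2) h2a h hco
    have hUodd : ¬ (2:ℤ) ∣ U := by
      rintro ⟨u₁, rfl⟩
      have h2b4 : (2:ℤ) ∣ b^4 :=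
        ⟨2*u₁^2 - 24*a₀^4 + 6*a₀^2*b^2, by linear_combination -hU2 - hu⟩
      exact hbodd (hp2int.dvd_of_dvd_pow h2b4)
    have hev1 : Even (U - b^2) := by
      rw [Int.even_sub]
      constructor
      · rintro ⟨r, hr⟩; exact absurd ⟨r, by omega⟩ hUodd
      · intro h
        exfalso
        have hEb : Even b := ((Int.even_pow (n := 2)).mp h).1
        obtain ⟨r, hr⟩ := hEb
        exact hbodd ⟨r, by omega⟩
    obtain ⟨k, hk⟩ := hev1
    have hb2 : b^2 = U - 2*k := by omega
    have key' : (k + 3*a₀^2) * (U - (k + 3*a₀^2)) = 3*a₀^4 := by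
      have h16 : (16:ℤ) * ((k + 3*a₀^2) * (U - (k + 3*a₀^2))) = 16 * (3*a₀^4) := by
        have keyb := key
        rw [hb2] at keyb
        linear_combination keyb
      exact mul_left_cancel₀ (by norm_num) h16
    have hprodpos' : (0:ℤ) < (k + 3*a₀^2) * (U - (k + 3*a₀^2)) := by rw [key']; positivity
    obtain ⟨hρ, hσ⟩ : 0 < k + 3*a₀^2 ∧ 0 < U - (k + 3*a₀^2) := by
      rcases mul_pos_iff.mp hprodpos' with h | h
      · exact h
      · exfalso; obtain ⟨h1, h2⟩ := h; linarith
    have hcop : IsCoprime (k + 3*a₀^2) (U - (k + 3*a₀^2)) := by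
      by_contra hnc
      obtain ⟨p, hp, hp1, hp2⟩ := exists_common_prime hnc (ne_of_gt hρ)
      have hpp : Prime (p:ℤ) := Nat.prime_iff_prime_int.mp hp
      have hple : (2:ℤ) ≤ (p:ℤ) := by exact_mod_cast hp.two_le
      have hpU : (p:ℤ) ∣ U := by
        have := dvd_add hp1 hp2; simpa using this
      have hpd : (p:ℤ) ∣ b^2 - 6*a₀^2 := by
        have h' : (U - (k + 3*a₀^2)) - (k + 3*a₀^2) = b^2 - 6*a₀^2 := by
          rw [hb2]; ring
        have := dvd_sub hp2 hp1; rwa [h'] at this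
      have hp3a : (p:ℤ) ∣ 3*a₀^4 := key' ▸ hp1.mul_right _
      rcases hpp.dvd_mul.mp hp3a with hp3 | hpa4
      · have hp3' : p = 3 := by
          have h3 : p ∣ 3 := by exact_mod_cast hp3
          exact (Nat.prime_dvd_prime_iff_eq hp (by norm_num)).mp h3
        subst hp3'
        have h3U : (3:ℤ) ∣ U := by exact_mod_cast hpU
        have h3b : (3:ℤ) ∣ b := by
          have h3b2 : (3:ℤ) ∣ b^2 := by
            have : (3:ℤ) ∣ (b^2 - 6*a₀^2) + 6*a₀^2 := by
              exact dvd_add (by exact_mod_cast hpd) ⟨2*a₀^2, by ring⟩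
            simpa using this
          exact hp3int.dvd_of_dvd_pow h3b2
        have h3a : (3:ℤ) ∣ 2*a₀ := nine_dvd_trick hu hU2 h3U h3b
        exact not_coprime_of_common (by norm_num) h3a h3b hco
      · have hpa₀ : (p:ℤ) ∣ a₀ := hpp.dvd_of_dvd_pow hpa4
        have hpa : (p:ℤ) ∣ 2*a₀ := hpa₀.mul_left 2
        have hpb : (p:ℤ) ∣ b := by
          have hpb2 : (p:ℤ) ∣ b^2 := by
            obtain ⟨c, hc⟩ := hpa₀
            obtain ⟨d, hd⟩ := hpd
            exact ⟨d + 6*(p:ℤ)*c^2, by linear_combination hd + (6*a₀ + 6*(p:ℤ)*c)*hc⟩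
          exact hpp.dvd_of_dvd_pow hpb2
        exact not_coprime_of_common hple hpa hpb hco
    have h3rs : (3:ℤ) ∣ (k + 3*a₀^2) * (U - (k + 3*a₀^2)) := key' ▸ ⟨a₀^4, rfl⟩
    rcases hp3int.dvd_mul.mp h3rs with h3r | h3s
    · obtain ⟨p, q, hP, hQ, hE, hcopq, hp0, hq0⟩ := factor3 hρ hσ hcop key' h3r
      refine ⟨p, q, hcopq, hp0, hq0, Or.inr ⟨by linear_combination 4*hE, ?_⟩⟩
      linear_combination hQ - hP + 6*hE - hk
    · obtain ⟨p, q, hP, hQ, hE, hcopq, hp0, hq0⟩ :=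
        factor3 (e := a₀) hσ hρ hcop.symm (by linear_combination key') h3s
      exfalso
      exact killK hcopq (c := b) (by linear_combination hP - hQ + 6*hE - hk)
  · -- a odd
    have haodd' : ¬ (2:ℤ) ∣ a := by
      rintro ⟨c, rfl⟩
      obtain ⟨k, hk⟩ := haodd
      omega
    have hcop : IsCoprime (2*U - (2*b^2-3*a^2)) (2*U + (2*b^2-3*a^2)) := by
      by_contra hnc
      obtain ⟨p, hp, hp1, hp2⟩ := exists_common_prime hnc (ne_of_gt hr2)
      have hpp : Prime (p:ℤ) := Nat.prime_iff_prime_int.mp hp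
      have hple : (2:ℤ) ≤ (p:ℤ) := by exact_mod_cast hp.two_le
      have hpU : (p:ℤ) ∣ 4*U := by
        have := dvd_add hp1 hp2
        have h' : (2*U - (2*b^2-3*a^2)) + (2*U + (2*b^2-3*a^2)) = 4*U := by ring
        rwa [h'] at this
      have hpt : (p:ℤ) ∣ 2*(2*b^2-3*a^2) := by
        have := dvd_sub hp2 hp1
        have h' : (2*U + (2*b^2-3*a^2)) - (2*U - (2*b^2-3*a^2)) = 2*(2*b^2-3*a^2) := by ring
        rwa [h'] at this
      have hp3a : (p:ℤ) ∣ 3*a^4 := key ▸ hp1.mul_right _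
      rcases hpp.dvd_mul.mp hp3a with hp3 | hpa4
      · have hp3' : p = 3 := by
          have h3 : p ∣ 3 := by exact_mod_cast hp3
          exact (Nat.prime_dvd_prime_iff_eq hp (by norm_num)).mp h3
        subst hp3'
        have h3U : (3:ℤ) ∣ U := by
          rcases hp3int.dvd_mul.mp (show (3:ℤ) ∣ 4*U by exact_mod_cast hpU) with h | h
          · norm_num at h
          · exact h
        have h3t : (3:ℤ) ∣ (2*b^2-3*a^2) := by
          rcases hp3int.dvd_mul.mp (show (3:ℤ) ∣ 2*(2*b^2-3*a^2) by exact_mod_cast hpt) with h | h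
          · norm_num at h
          · exact h
        have h3b : (3:ℤ) ∣ b := by
          have h3b2 : (3:ℤ) ∣ 2*b^2 := by
            have : (3:ℤ) ∣ (2*b^2-3*a^2) + 3*a^2 := dvd_add h3t ⟨a^2, by ring⟩
            simpa using this
          rcases hp3int.dvd_mul.mp h3b2 with h | h
          · norm_num at h
          · exact hp3int.dvd_of_dvd_pow h
        have h3a : (3:ℤ) ∣ a := nine_dvd_trick hu hU2 h3U h3b
        exact not_coprime_of_common (by norm_num) h3a h3b hco
      · have hpa : (p:ℤ) ∣ a := hpp.dvd_of_dvd_pow hpa4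
        have hpne2 : (p:ℤ) ≠ 2 := by
          intro h2
          rw [h2] at hpa
          exact haodd' hpa
        have hpeq2 : ∀ h2 : (p:ℤ) ∣ 2, False := by
          intro h2
          have h2' : p ∣ 2 := by exact_mod_cast h2
          exact hpne2 (by exact_mod_cast (Nat.prime_dvd_prime_iff_eq hp Nat.prime_two).mp h2')
        have hpt' : (p:ℤ) ∣ (2*b^2-3*a^2) := by
          rcases hpp.dvd_mul.mp hpt with h | h
          · exact absurd h (fun h => hpeq2 h)
          · exact h
        have hpb : (p:ℤ) ∣ b := by
          have hpb2 : (p:ℤ) ∣ 2*b^2 := by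
            obtain ⟨c, hc⟩ := hpa
            obtain ⟨d, hd⟩ := hpt'
            exact ⟨d + 3*(p:ℤ)*c^2, by linear_combination hd + (3*a + 3*(p:ℤ)*c)*hc⟩
          rcases hpp.dvd_mul.mp hpb2 with h | h
          · exact absurd h (fun h => hpeq2 h)
          · exact hpp.dvd_of_dvd_pow h
        exact not_coprime_of_common hple hpa hpb hco
    have h3rs : (3:ℤ) ∣ (2*U - (2*b^2-3*a^2)) * (2*U + (2*b^2-3*a^2)) := key ▸ ⟨a^4, rfl⟩
    rcases hp3int.dvd_mul.mp h3rs with h3r | h3s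
    · obtain ⟨p, q, hP, hQ, hE, hcopq, hp0, hq0⟩ := factor3 hr2 hs2 hcop key h3r
      refine ⟨p, q, hcopq, hp0, hq0, Or.inl ⟨hE, ?_⟩⟩
      linear_combination hQ - hP + 6*hE
    · obtain ⟨p, q, hP, hQ, hE, hcopq, hp0, hq0⟩ :=
        factor3 (e := a) hs2 hr2 hcop.symm (by linear_combination key) h3s
      exfalso
      exact killK hcopq (c := 2*b) (by linear_combination hP - hQ + 6*hE)


lemma one_le_sq {q : ℤ} (h : q ≠ 0) : 1 ≤ q^2 := by
  rcases h.lt_or_gt with h | h <;> nlinarith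

lemma Q1 : ∀ n : ℕ, ∀ e u v : ℤ, e.natAbs ≤ n → IsCoprime u e → e ≠ 0 →
    v^2 = u^4 + 6*u^2*e^2 - 3*e^4 → u^2 = 1 ∧ e^2 = 1 := by
  intro n
  induction n using Nat.strong_induction_on with
  | _ n IH =>
  intro e u v hle hco he hv
  have hp3int : Prime (3:ℤ) := by norm_num
  have hpar : Even ((u^2+3*e^2) - v) := by
    have h2 : Even ((u^2+3*e^2)^2 - v^2) := ⟨6*e^4, by linear_combination -hv⟩
    rw [Int.even_sub] at h2 ⊢
    rw [Int.even_pow' (by norm_num), Int.even_pow' (by norm_num)] at h2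
    exact h2
  obtain ⟨r, hr⟩ := hpar
  have hveq : v = u^2 + 3*e^2 - 2*r := by linarith
  have hprod : r * (u^2+3*e^2-r) = 3*e^4 := by
    have hprod4 : (4:ℤ) * (r * (u^2+3*e^2-r)) = 4*(3*e^4) := by
      rw [hveq] at hv
      linear_combination -hv
    exact mul_left_cancel₀ (by norm_num) hprod4
  have hwpos : (0:ℤ) < u^2+3*e^2 := by positivity
  have hprodpos : (0:ℤ) < r * (u^2+3*e^2-r) := by rw [hprod]; positivity
  obtain ⟨hrpos, hspos⟩ : 0 < r ∧ 0 < u^2+3*e^2-r := by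
    rcases mul_pos_iff.mp hprodpos with h | h
    · exact h
    · exfalso; obtain ⟨h1, h2⟩ := h; linarith
  have hcop : IsCoprime r (u^2+3*e^2-r) := by
    by_contra hnc
    obtain ⟨p, hp, hp1, hp2⟩ := exists_common_prime hnc (ne_of_gt hrpos)
    have hpp : Prime (p:ℤ) := Nat.prime_iff_prime_int.mp hp
    have hple : (2:ℤ) ≤ (p:ℤ) := by exact_mod_cast hp.two_le
    have hpw : (p:ℤ) ∣ u^2+3*e^2 := by
      have := dvd_add hp1 hp2; simpa using this
    have hp3e : (p:ℤ) ∣ 3*e^4 := hprod ▸ hp1.mul_right _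
    rcases hpp.dvd_mul.mp hp3e with hp3 | hpe4
    · have hp3' : p = 3 :=
        (Nat.prime_dvd_prime_iff_eq hp (by norm_num)).mp (by exact_mod_cast hp3)
      subst hp3'
      have h3u : (3:ℤ) ∣ u := by
        have h3u2 : (3:ℤ) ∣ u^2 := by
          have : (3:ℤ) ∣ (u^2+3*e^2) - 3*e^2 := dvd_sub hpw ⟨e^2, by ring⟩
          simpa using this
        exact hp3int.dvd_of_dvd_pow h3u2
      have h3v : (3:ℤ) ∣ v := by
        rw [hveq]
        exact dvd_sub hpw (hp1.mul_left 2)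
      obtain ⟨u₁, rfl⟩ := h3u
      obtain ⟨v₁, rfl⟩ := h3v
      have h9 : (9:ℤ) ∣ 3*e^4 := ⟨9*u₁^4 + 6*u₁^2*e^2 - v₁^2, by linear_combination hv⟩
      obtain ⟨k9, hk9⟩ := h9
      have h3e : (3:ℤ) ∣ e := hp3int.dvd_of_dvd_pow (⟨k9, by linarith⟩ : (3:ℤ) ∣ e^4)
      exact not_coprime_of_common (by norm_num) ⟨u₁, rfl⟩ h3e hco
    · have hpe : (p:ℤ) ∣ e := hpp.dvd_of_dvd_pow hpe4
      have hpu : (p:ℤ) ∣ u := by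
        have hpu2 : (p:ℤ) ∣ u^2 := by
          obtain ⟨c, hc⟩ := hpe
          have h3e2 : (p:ℤ) ∣ 3*e^2 := ⟨3*(p:ℤ)*c^2, by linear_combination (3*e + 3*(p:ℤ)*c)*hc⟩
          have : (p:ℤ) ∣ (u^2+3*e^2) - 3*e^2 := dvd_sub hpw h3e2
          simpa using this
        exact hpp.dvd_of_dvd_pow hpu2
      exact not_coprime_of_common hple hpu hpe hco
  have h3rs : (3:ℤ) ∣ r * (u^2+3*e^2-r) := hprod ▸ ⟨e^4, rfl⟩
  have hstage : ∃ a b : ℤ, IsCoprime a b ∧ a ≠ 0 ∧ b ≠ 0 ∧ e^2 = a^2*b^2 ∧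
      u^2 = 3*a^4 - 3*a^2*b^2 + b^4 := by
    rcases hp3int.dvd_mul.mp h3rs with h3r | h3s
    · obtain ⟨a, b, hA, hB, hE, hcab, ha0, hb0⟩ := factor3 (e := e) hrpos hspos hcop hprod h3r
      exact ⟨a, b, hcab, ha0, hb0, hE, by linear_combination hA + hB - 3*hE⟩
    · obtain ⟨a, b, hA, hB, hE, hcab, ha0, hb0⟩ :=
        factor3 (e := e) hspos hrpos hcop.symm (by linear_combination hprod) h3s
      exact ⟨a, b, hcab, ha0, hb0, hE, by linear_combination hA + hB - 3*hE⟩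
  obtain ⟨a, b, hcab, ha0, hb0, hE, hu2⟩ := hstage
  obtain ⟨p, q, hcopq, hp0, hq0, hPQ⟩ := Q2step hcab ha0 hb0 hu2
  rcases hPQ with ⟨hA2, heq⟩ | ⟨hA2, heq⟩
  · -- odd case: a² = p²q², (2b)² = q⁴+6q²p²-3p⁴
    have he2 : e^2 = p^2*q^2*b^2 := by linear_combination hE + (b^2)*hA2
    by_cases hlt : p.natAbs < e.natAbs
    · obtain ⟨hq2, hp2⟩ := IH p.natAbs (lt_of_lt_of_le hlt hle) p q (2*b) le_rfl hcopq.symm hp0 heq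
      have hq4 : q^4 = 1 := by linear_combination (q^2+1)*hq2
      have hp4 : p^4 = 1 := by linear_combination (p^2+1)*hp2
      have hbb : 4*b^2 = 4 := by
        linear_combination heq + hq4 + 6*p^2*hq2 + 6*hp2 - 3*hp4
      have hb2 : b^2 = 1 := by linarith
      have ha2 : a^2 = 1 := by linear_combination hA2 + q^2*hp2 + hq2
      constructor
      · linear_combination hu2 + (3*a^2+3-3*b^2)*ha2 + (b^2-2)*hb2
      · linear_combination he2 + q^2*b^2*hp2 + b^2*hq2 + hb2
    · push_neg at hlt
      have hple2 : p^2 ≤ e^2 := by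
        have h1 : 1 ≤ q^2 := one_le_sq hq0
        have h2 : 1 ≤ b^2 := one_le_sq hb0
        nlinarith [sq_nonneg p]
      have hpe2 : p^2 = e^2 := by
        rcases lt_or_eq_of_le hple2 with h | h
        · exact absurd (natAbs_lt_iff_sq_lt.mpr h) (by omega)
        · exact h
      have hqb : q^2*b^2 = 1 := by
        have hpne : p^2 ≠ 0 := pow_ne_zero 2 hp0
        have hh : p^2 * (q^2*b^2) = p^2 * 1 := by linear_combination -he2 - hpe2
        exact mul_left_cancel₀ hpne hh
      have hq2 : q^2 = 1 := by
        have h1 : 1 ≤ q^2 := one_le_sq hq0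
        have h2 : 1 ≤ b^2 := one_le_sq hb0
        nlinarith
      have hb2 : b^2 = 1 := by
        have hh : q^2*b^2 = q^2*1 := by linear_combination hqb - hq2
        exact mul_left_cancel₀ (pow_ne_zero 2 hq0) hh
      have hq4 : q^4 = 1 := by linear_combination (q^2+1)*hq2
      have h4' : 4*b^2 = 1 + 6*p^2 - 3*p^4 := by
        linear_combination heq + hq4 + 6*p^2*hq2
      have h3z : 3*(p^2-1)^2 = 0 := by linear_combination h4' - 4*hb2
      have h0 : (p^2-1)^2 = 0 := by linarith [sq_nonneg (p^2-1)]
      have hp2 : p^2 = 1 := by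
        have := sq_eq_zero_iff.mp h0
        linarith
      have ha2 : a^2 = 1 := by linear_combination hA2 + q^2*hp2 + hq2
      constructor
      · linear_combination hu2 + (3*a^2+3-3*b^2)*ha2 + (b^2-2)*hb2
      · linear_combination -hpe2 + hp2
  · -- even case: a² = 4p²q²
    have he2 : e^2 = 4*(p^2*q^2)*b^2 := by linear_combination hE + (b^2)*hA2
    have hlt : p.natAbs < e.natAbs := by
      rw [natAbs_lt_iff_sq_lt]
      have hqb2 : 1 ≤ (q*b)^2 := one_le_sq (mul_ne_zero hq0 hb0)
      have hp2pos : (0:ℤ) < p^2 := by positivity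
      have h44 : 4*p^2*1 ≤ 4*p^2*((q*b)^2) :=
        mul_le_mul_of_nonneg_left hqb2 (by positivity)
      have he2' : e^2 = 4*p^2*((q*b)^2) := by linear_combination he2
      linarith
    obtain ⟨hq2, hp2⟩ := IH p.natAbs (lt_of_lt_of_le hlt hle) p q b le_rfl hcopq.symm hp0 heq
    exfalso
    have hq4 : q^4 = 1 := by linear_combination (q^2+1)*hq2
    have hp4 : p^4 = 1 := by linear_combination (p^2+1)*hp2
    have hb4 : b^2 = 4 := by
      linear_combination heq + hq4 + 6*p^2*hq2 + 6*hp2 - 3*hp4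
    have ha4 : a^2 = 4 := by linear_combination hA2 + 4*q^2*hp2 + 4*hq2
    have h2b : (2:ℤ) ∣ b := by
      have hzz : (b-2)*(b+2) = 0 := by linear_combination hb4
      rcases mul_eq_zero.mp hzz with h | h
      · exact ⟨1, by linarith⟩
      · exact ⟨-1, by linarith⟩
    have h2a : (2:ℤ) ∣ a := by
      have hzz : (a-2)*(a+2) = 0 := by linear_combination ha4
      rcases mul_eq_zero.mp hzz with h | h
      · exact ⟨1, by linarith⟩
      · exact ⟨-1, by linarith⟩
    exact not_coprime_of_common le_rfl h2a h2b hcab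


lemma step_int (m e n : ℤ) (hepos : 0 < e) (hco : IsCoprime m e)
    (hn : n^2 = m^3 - 15*m*e^4 + 22*e^6) :
    (m = 2 ∧ e = 1 ∧ n = 0) ∨ (m = 3 ∧ e = 1 ∧ (n = 2 ∨ n = -2)) ∨
      (m = -1 ∧ e = 1 ∧ (n = 6 ∨ n = -6)) := by
  have hp3int : Prime (3:ℤ) := by norm_num
  have hABeq : (m - 2*e^2) * (m^2 + 2*m*e^2 - 11*e^4) = n^2 := by linear_combination -hn
  have hAe : IsCoprime (m - 2*e^2) e := by
    have h := hco.add_mul_left_left (-2*e)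
    have h2 : m + e*(-2*e) = m - 2*e^2 := by ring
    rwa [h2] at h
  have he0 : e ≠ 0 := ne_of_gt hepos
  rcases eq_or_ne n 0 with rfl | hn0
  · -- n = 0
    have h0 : (m - 2*e^2) * (m^2 + 2*m*e^2 - 11*e^4) = 0 := by linear_combination hABeq
    rcases mul_eq_zero.mp h0 with hA0 | hB0
    · have hdvd : e ∣ m := ⟨2*e, by linarith⟩
      have hunit : IsUnit e := hco.isUnit_of_dvd' hdvd dvd_rfl
      have he1 : e = 1 := by
        rcases Int.isUnit_iff.mp hunit with h | h
        · exact h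
        · omega
      subst he1
      exact Or.inl ⟨by linarith, rfl, rfl⟩
    · exfalso
      have hsq : (m + e^2)^2 = 12*e^4 := by linear_combination hB0
      have h3sq : (3:ℤ) ∣ (m + e^2)^2 := ⟨4*e^4, by linear_combination hsq⟩
      have h3me : (3:ℤ) ∣ (m + e^2) := hp3int.dvd_of_dvd_pow h3sq
      obtain ⟨k, hk⟩ := h3me
      have h34 : (3:ℤ) ∣ 4*e^4 := by
        have h912 : (12:ℤ)*e^4 = 9*k^2 := by linear_combination -hsq + (m+e^2+3*k)*hk
        exact ⟨k^2, by linarith⟩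
      have h3e : (3:ℤ) ∣ e := by
        rcases hp3int.dvd_mul.mp h34 with h | h
        · norm_num at h
        · exact hp3int.dvd_of_dvd_pow h
      have h3m : (3:ℤ) ∣ m := by
        obtain ⟨c, hc⟩ := h3e
        exact ⟨k - 3*c^2, by linear_combination hk - (e + 3*c)*hc⟩
      exact not_coprime_of_common (by norm_num) h3m h3e hco
  · -- n ≠ 0
    have hA0 : m - 2*e^2 ≠ 0 := by
      intro h
      rw [h, zero_mul] at hABeq
      exact hn0 (by nlinarith [hABeq, sq_nonneg n])
    by_cases hABcop : IsCoprime (m - 2*e^2) (m^2 + 2*m*e^2 - 11*e^4)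
    · obtain ⟨u, hu⟩ := Int.sq_of_isCoprime hABcop hABeq
      rcases hu with hA | hA
      · -- m - 2e² = u² : leads to x = 3
        have hu0 : u ≠ 0 := by
          intro h; rw [h] at hA; simp at hA; exact hA0 (by linarith [hA])
        have hudvd : u ∣ n := by
          rw [← Int.pow_dvd_pow_iff (two_ne_zero)]
          exact ⟨m^2 + 2*m*e^2 - 11*e^4, by linear_combination -hABeq + (m^2+2*m*e^2-11*e^4)*hA⟩
        obtain ⟨k, hk⟩ := hudvd
        have hBk : m^2 + 2*m*e^2 - 11*e^4 = k^2 := by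
          have h4 : u^2 * (m^2 + 2*m*e^2 - 11*e^4) = u^2 * k^2 := by
            linear_combination hABeq - (m^2+2*m*e^2-11*e^4)*hA + (n + u*k)*hk
          exact mul_left_cancel₀ (pow_ne_zero 2 hu0) h4
        have hque : IsCoprime u e :=
          IsCoprime.of_isCoprime_of_dvd_left (hA ▸ hAe) (dvd_pow_self u two_ne_zero)
        have hquartic : k^2 = u^4 + 6*u^2*e^2 - 3*e^4 := by
          linear_combination -hBk + (m + u^2 + 4*e^2)*hA
        obtain ⟨hu2, he2⟩ := Q1 e.natAbs e u k le_rfl hque he0 hquartic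
        have he1 : e = 1 := by
          have hz : (e-1)*(e+1) = 0 := by linear_combination he2
          rcases mul_eq_zero.mp hz with h | h
          · linarith
          · linarith
        subst he1
        have hm3 : m = 3 := by nlinarith [hA, hu2]
        subst hm3
        norm_num at hn
        have hz : (n-2)*(n+2) = 0 := by linear_combination hn
        rcases mul_eq_zero.mp hz with h | h
        · exact Or.inr (Or.inl ⟨rfl, rfl, Or.inl (by linarith)⟩)
        · exact Or.inr (Or.inl ⟨rfl, rfl, Or.inr (by linarith)⟩)
      · -- m - 2e² = -u² : impossible
        exfalso
        have hu0 : u ≠ 0 := by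
          intro h; rw [h] at hA; simp at hA; exact hA0 (by linarith [hA])
        have hudvd : u ∣ n := by
          rw [← Int.pow_dvd_pow_iff (two_ne_zero)]
          exact ⟨-(m^2 + 2*m*e^2 - 11*e^4),
            by linear_combination -hABeq + (m^2+2*m*e^2-11*e^4)*hA⟩
        obtain ⟨k, hk⟩ := hudvd
        have hBk : -(m^2 + 2*m*e^2 - 11*e^4) = k^2 := by
          have h4 : u^2 * (-(m^2 + 2*m*e^2 - 11*e^4)) = u^2 * k^2 := by
            linear_combination hABeq - (m^2+2*m*e^2-11*e^4)*hA + (n + u*k)*hk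
          exact mul_left_cancel₀ (pow_ne_zero 2 hu0) h4
        have hque : IsCoprime u e := by
          have hAe' : IsCoprime (-(m - 2*e^2)) e := hAe.neg_left
          have h2 : -(m - 2*e^2) = u^2 := by rw [hA]; ring
          exact IsCoprime.of_isCoprime_of_dvd_left (h2 ▸ hAe') (dvd_pow_self u two_ne_zero)
        exact killK hque.symm (c := k) (by linear_combination -hBk - (m + 4*e^2 - u^2)*hA)
    · -- non-coprime: common factor 3
      obtain ⟨p, hp, hpA, hpB⟩ := exists_common_prime hABcop hA0
      have hpp : Prime (p:ℤ) := Nat.prime_iff_prime_int.mp hp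
      have hp3e4 : (p:ℤ) ∣ 3*e^4 := by
        have hd := dvd_sub (hpA.mul_left (m+4*e^2)) hpB
        have h2 : (m+4*e^2)*(m-2*e^2) - (m^2+2*m*e^2-11*e^4) = 3*e^4 := by ring
        rwa [h2] at hd
      have hp3 : p = 3 := by
        rcases hpp.dvd_mul.mp hp3e4 with h | h
        · exact (Nat.prime_dvd_prime_iff_eq hp (by norm_num)).mp (by exact_mod_cast h)
        · exfalso
          have hpe : (p:ℤ) ∣ e := hpp.dvd_of_dvd_pow h
          have hpm : (p:ℤ) ∣ m := by
            obtain ⟨c, hc⟩ := hpe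
            obtain ⟨d, hd⟩ := hpA
            exact ⟨d + 2*(p:ℤ)*c^2, by linear_combination hd + (2*e+2*(p:ℤ)*c)*hc⟩
          exact not_coprime_of_common (by exact_mod_cast hp.two_le) hpm hpe hco
      subst hp3
      obtain ⟨A₁, hA1⟩ : (3:ℤ) ∣ (m-2*e^2) := by exact_mod_cast hpA
      obtain ⟨B₁, hB1⟩ : (3:ℤ) ∣ (m^2+2*m*e^2-11*e^4) := by exact_mod_cast hpB
      have h3n : (3:ℤ) ∣ n := by
        have h3n2 : (3:ℤ) ∣ n^2 := ⟨3*A₁*B₁, by rw [← hABeq, hA1, hB1]; ring⟩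
        exact hp3int.dvd_of_dvd_pow h3n2
      obtain ⟨n₁, hn1⟩ := h3n
      have hprod1 : A₁ * B₁ = n₁^2 := by
        have h9 : (9:ℤ) * (A₁*B₁) = 9 * n₁^2 := by
          rw [hA1, hB1, hn1] at hABeq
          linear_combination hABeq
        exact mul_left_cancel₀ (by norm_num) h9
      have hA10 : A₁ ≠ 0 := by
        intro h; rw [h] at hA1; simp at hA1; exact hA0 hA1
      have hcop1 : IsCoprime A₁ B₁ := by
        by_contra hnc
        obtain ⟨q, hq, hqA, hqB⟩ := exists_common_prime hnc hA10
        have hqq : Prime (q:ℤ) := Nat.prime_iff_prime_int.mp hq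
        have hqe4 : (q:ℤ) ∣ e^4 := by
          have hd := dvd_sub (hqA.mul_left (m+4*e^2)) hqB
          have h2 : (m+4*e^2)*A₁ - B₁ = e^4 := by
            have h3 : (3:ℤ)*((m+4*e^2)*A₁ - B₁) = 3*e^4 := by
              linear_combination hB1 - (m+4*e^2)*hA1
            exact mul_left_cancel₀ (by norm_num) h3
          rwa [h2] at hd
        have hqe : (q:ℤ) ∣ e := hqq.dvd_of_dvd_pow hqe4
        have hqm : (q:ℤ) ∣ m := by
          obtain ⟨c, hc⟩ := hqe
          obtain ⟨d, hd⟩ := hqA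
          exact ⟨3*d + 2*(q:ℤ)*c^2, by linear_combination hA1 + 3*hd + (2*e+2*(q:ℤ)*c)*hc⟩
        exact not_coprime_of_common (by exact_mod_cast hq.two_le) hqm hqe hco
      obtain ⟨u, hu⟩ := Int.sq_of_isCoprime hcop1 hprod1
      have hu0 : u ≠ 0 := by
        intro h
        rcases hu with hA2 | hA2 <;> (rw [h] at hA2; simp at hA2; exact hA10 hA2)
      have hudvd : u ∣ n₁ := by
        rw [← Int.pow_dvd_pow_iff (two_ne_zero)]
        rcases hu with hA2 | hA2
        · exact ⟨B₁, by linear_combination -hprod1 + B₁*hA2⟩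
        · exact ⟨-B₁, by linear_combination -hprod1 + B₁*hA2⟩
      obtain ⟨k, hk⟩ := hudvd
      have hcue : IsCoprime u e := by
        have hAdvd : u ∣ (m - 2*e^2) := by
          rcases hu with hA2 | hA2
          · exact ⟨3*u, by rw [hA1, hA2]; ring⟩
          · exact ⟨-3*u, by rw [hA1, hA2]; ring⟩
        exact IsCoprime.of_isCoprime_of_dvd_left hAe hAdvd
      rcases hu with hA2 | hA2
      · -- A₁ = u² : impossible (kill form)
        exfalso
        have hBk : B₁ = k^2 := by
          have h4 : u^2 * B₁ = u^2 * k^2 := by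
            linear_combination hprod1 - B₁*hA2 + (n₁ + u*k)*hk
          exact mul_left_cancel₀ (pow_ne_zero 2 hu0) h4
        have hkill : k^2 = 3*u^4 + 6*u^2*e^2 - e^4 := by
          have h3 : (3:ℤ)*k^2 = 3*(3*u^4 + 6*u^2*e^2 - e^4) := by
            linear_combination -hB1 - 3*hBk + (m + 4*e^2 + 3*u^2)*hA1 + 3*(m + 4*e^2 + 3*u^2)*hA2
          exact mul_left_cancel₀ (by norm_num) h3
        exact killK hcue (c := k) hkill
      · -- A₁ = -u² : x = -1
        have hBk : -B₁ = k^2 := by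
          have h4 : u^2 * (-B₁) = u^2 * k^2 := by
            linear_combination hprod1 - B₁*hA2 + (n₁ + u*k)*hk
          exact mul_left_cancel₀ (pow_ne_zero 2 hu0) h4
        have hquartic : k^2 = e^4 + 6*e^2*u^2 - 3*u^4 := by
          have h3 : (3:ℤ)*k^2 = 3*(e^4 + 6*e^2*u^2 - 3*u^4) := by
            linear_combination -3*hBk + hB1 - (m + 4*e^2 - 3*u^2)*hA1 - 3*(m + 4*e^2 - 3*u^2)*hA2
          exact mul_left_cancel₀ (by norm_num) h3
        obtain ⟨he2, hu2⟩ := Q1 u.natAbs u e k le_rfl hcue.symm hu0 hquartic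
        have he1 : e = 1 := by
          have hz : (e-1)*(e+1) = 0 := by linear_combination he2
          rcases mul_eq_zero.mp hz with h | h
          · linarith
          · linarith
        subst he1
        have hm1 : m = -1 := by nlinarith [hA1, hA2, hu2]
        subst hm1
        norm_num at hn
        have hz : (n-6)*(n+6) = 0 := by linear_combination hn
        rcases mul_eq_zero.mp hz with h | h
        · exact Or.inr (Or.inr ⟨rfl, rfl, Or.inl (by linarith)⟩)
        · exact Or.inr (Or.inr ⟨rfl, rfl, Or.inr (by linarith)⟩)


lemma rat_coprime_num_den (q : ℚ) : IsCoprime (q.num) ((q.den : ℤ)) := by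
  rw [Int.isCoprime_iff_gcd_eq_one]
  simpa [Int.gcd] using q.reduced

lemma step_rat (x y : ℚ) (h : y^2 = x^3 - 15*x + 22) :
    (x = 2 ∧ y = 0) ∨ (x = 3 ∧ (y = 2 ∨ y = -2)) ∨ (x = -1 ∧ (y = 6 ∨ y = -6)) := by
  set a : ℤ := x.num with ha
  set b : ℤ := (x.den : ℤ) with hb
  set c : ℤ := y.num with hc
  set d : ℤ := (y.den : ℤ) with hd
  have hbpos : 0 < b := by rw [hb]; exact_mod_cast x.pos
  have hdpos : 0 < d := by rw [hd]; exact_mod_cast y.pos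
  have hb0 : (b:ℚ) ≠ 0 := by exact_mod_cast ne_of_gt hbpos
  have hd0 : (d:ℚ) ≠ 0 := by exact_mod_cast ne_of_gt hdpos
  have hxab : x = (a:ℚ)/(b:ℚ) := by rw [ha, hb]; exact_mod_cast (Rat.num_div_den x).symm
  have hycd : y = (c:ℚ)/(d:ℚ) := by rw [hc, hd]; exact_mod_cast (Rat.num_div_den y).symm
  have hcoab : IsCoprime a b := rat_coprime_num_den x
  have hcocd : IsCoprime c d := rat_coprime_num_den y
  have key : c^2 * b^3 = (a^3 - 15*a*b^2 + 22*b^3) * d^2 := by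
    have h2 : ((c:ℚ))^2 * (b:ℚ)^3 = ((a:ℚ)^3 - 15*(a:ℚ)*(b:ℚ)^2 + 22*(b:ℚ)^3) * (d:ℚ)^2 := by
      rw [hxab, hycd] at h
      field_simp at h
      have h3 : (b:ℚ) * ((c:ℚ)^2 * (b:ℚ)^3) =
          (b:ℚ) * (((a:ℚ)^3 - 15*(a:ℚ)*(b:ℚ)^2 + 22*(b:ℚ)^3) * (d:ℚ)^2) := by
        linear_combination (b:ℚ) * h
      exact mul_left_cancel₀ hb0 h3
    exact_mod_cast h2
  -- coprimality of N with b
  have hNb : IsCoprime (a^3 - 15*a*b^2 + 22*b^3) b := by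
    have h1 : IsCoprime (a^3) b := hcoab.pow_left
    have h2 := h1.add_mul_left_left (-15*a*b + 22*b^2)
    have h3 : a^3 + b*(-15*a*b + 22*b^2) = a^3 - 15*a*b^2 + 22*b^3 := by ring
    rwa [h3] at h2
  have hdb : d^2 ∣ b^3 := by
    have h1 : d^2 ∣ c^2 * b^3 := ⟨a^3 - 15*a*b^2 + 22*b^3, by rw [key]; ring⟩
    exact ((hcocd.symm.pow (m := 2) (n := 2)).dvd_of_dvd_mul_left h1)
  have hbd : b^3 ∣ d^2 := by
    have h1 : b^3 ∣ (a^3 - 15*a*b^2 + 22*b^3) * d^2 := ⟨c^2, by rw [← key]; ring⟩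
    have hco3 : IsCoprime (b^3) (a^3 - 15*a*b^2 + 22*b^3) := by
      have := hNb.symm.pow (m := 3) (n := 1)
      simpa using this
    exact hco3.dvd_of_dvd_mul_left h1
  have hbd_eq : b^3 = d^2 := Int.dvd_antisymm (by positivity) (by positivity) hbd hdb
  have hcN : c^2 = a^3 - 15*a*b^2 + 22*b^3 := by
    have hb3 : b^3 ≠ 0 := by positivity
    have : c^2 * b^3 = (a^3 - 15*a*b^2 + 22*b^3) * b^3 := by rw [key, hbd_eq]
    exact mul_right_cancel₀ hb3 this
  -- b is a square
  obtain ⟨e, hde⟩ : b ∣ d := by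
    rw [← Int.pow_dvd_pow_iff (two_ne_zero)]
    exact ⟨b, by linear_combination -hbd_eq⟩
  have hepos : 0 < e := by
    by_contra hne
    push_neg at hne
    nlinarith [hde, hdpos, hbpos]
  have heb : e^2 = b := by
    have hb2 : b^2 ≠ 0 := by positivity
    have h2 : b^2 * b = b^2 * e^2 := by
      rw [hde] at hbd_eq
      linear_combination hbd_eq
    exact (mul_left_cancel₀ hb2 h2).symm
  have hd3 : d = e^3 := by rw [hde, ← heb]; ring
  have hcome : IsCoprime a e := by
    have hdvd : e ∣ b := ⟨e, by rw [← heb]; ring⟩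
    exact IsCoprime.of_isCoprime_of_dvd_right hcoab hdvd
  have hn : c^2 = a^3 - 15*a*e^4 + 22*e^6 := by
    rw [← heb] at hcN
    linear_combination hcN
  rcases step_int a e c hepos hcome hn with ⟨hm, he1, hn0⟩ | ⟨hm, he1, hn0⟩ | ⟨hm, he1, hn0⟩ <;>
    [skip; skip; skip]
  · left
    have hb1 : b = 1 := by rw [← heb, he1]; norm_num
    have hd1 : d = 1 := by rw [hd3, he1]; norm_num
    constructor
    · rw [hxab, hm, hb1]; norm_num
    · rw [hycd, hn0, hd1]; norm_num
  · right; left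
    have hb1 : b = 1 := by rw [← heb, he1]; norm_num
    have hd1 : d = 1 := by rw [hd3, he1]; norm_num
    refine ⟨by rw [hxab, hm, hb1]; norm_num, ?_⟩
    rcases hn0 with h2 | h2
    · left; rw [hycd, h2, hd1]; norm_num
    · right; rw [hycd, h2, hd1]; norm_num
  · right; right
    have hb1 : b = 1 := by rw [← heb, he1]; norm_num
    have hd1 : d = 1 := by rw [hd3, he1]; norm_num
    refine ⟨by rw [hxab, hm, hb1]; norm_num, ?_⟩
    rcases hn0 with h2 | h2
    · left; rw [hycd, h2, hd1]; norm_num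
    · right; rw [hycd, h2, hd1]; norm_num


namespace CurveX3
open WeierstrassCurve

noncomputable section

abbrev W : WeierstrassCurve.Affine ℚ :=
  (WeierstrassCurve.mk 0 0 0 (-15) 22 : WeierstrassCurve ℚ).toAffine

lemma ns (x y : ℚ) (heq : y^2 = x^3 - 15*x + 22) (hy : y ≠ 0 ∨ 3*x^2 - 15 ≠ 0) :
    W.Nonsingular x y := by
  rw [WeierstrassCurve.Affine.nonsingular_iff, WeierstrassCurve.Affine.equation_iff]
  constructor
  · show y^2 + 0*x*y + 0*y = x^3 + 0*x^2 + (-15)*x + 22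
    linear_combination heq
  · show (0:ℚ)*y ≠ 3*x^2 + 2*0*x + (-15) ∨ y ≠ -y - 0*x - 0
    rcases hy with h | h
    · right; intro hc; apply h; linarith
    · left; intro hc; apply h; linarith [hc]

lemma ns1 : W.Nonsingular 2 0 := ns 2 0 (by norm_num) (Or.inr (by norm_num))
lemma ns2 : W.Nonsingular 3 2 := ns 3 2 (by norm_num) (Or.inl (by norm_num))
lemma ns3 : W.Nonsingular 3 (-2) := ns 3 (-2) (by norm_num) (Or.inl (by norm_num))
lemma ns4 : W.Nonsingular (-1) 6 := ns (-1) 6 (by norm_num) (Or.inl (by norm_num))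
lemma ns5 : W.Nonsingular (-1) (-6) := ns (-1) (-6) (by norm_num) (Or.inl (by norm_num))

def f : Fin 6 → W.Point :=
  ![.zero, .some _ _ ns1, .some _ _ ns2, .some _ _ ns3, .some _ _ ns4, .some _ _ ns5]

lemma f_surj : Function.Surjective f := by
  intro P
  cases P with
  | zero => exact ⟨0, rfl⟩
  | @some x y h =>
    have heq : y^2 = x^3 - 15*x + 22 := by
      have h1 := h.1
      rw [WeierstrassCurve.Affine.equation_iff] at h1
      have h2 : y^2 + 0*x*y + 0*y = x^3 + 0*x^2 + (-15)*x + 22 := h1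
      linear_combination h2
    rcases step_rat x y heq with ⟨hx, hy⟩ | ⟨hx, hy | hy⟩ | ⟨hx, hy | hy⟩
    · subst hx; subst hy; exact ⟨1, rfl⟩
    · subst hx; subst hy; exact ⟨2, rfl⟩
    · subst hx; subst hy; exact ⟨3, rfl⟩
    · subst hx; subst hy; exact ⟨4, rfl⟩
    · subst hx; subst hy; exact ⟨5, rfl⟩

lemma f0 : f 0 = .zero := rfl
lemma f1 : f 1 = .some _ _ ns1 := rfl
lemma f2 : f 2 = .some _ _ ns2 := rfl
lemma f3 : f 3 = .some _ _ ns3 := rfl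
lemma f4 : f 4 = .some _ _ ns4 := rfl
lemma f5 : f 5 = .some _ _ ns5 := rfl

lemma f_inj : Function.Injective f := by
  intro i j hij
  fin_cases i <;> fin_cases j <;>
    simp_all [f0, f1, f2, f3, f4, f5, WeierstrassCurve.Affine.Point.some.injEq] <;>
    (try obtain ⟨h1, h2⟩ := hij) <;> norm_num at *

end

end CurveX3

/-- The elliptic curve `y² = x³ - 15x + 22` over `ℚ` has Mordell–Weil rank `0`
(every rational point is torsion) and its torsion subgroup has order `6`. -/
theorem rank_zero_torsion_six_of_X3_sub_15X_add_22 :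
    (∀ P : (WeierstrassCurve.mk 0 0 0 (-15) 22 : WeierstrassCurve ℚ).toAffine.Point,
      IsOfFinAddOrder P) ∧
    Nat.card (WeierstrassCurve.mk 0 0 0 (-15) 22 : WeierstrassCurve ℚ).toAffine.Point = 6 := by
  have hbij : Function.Bijective CurveX3.f := ⟨CurveX3.f_inj, CurveX3.f_surj⟩
  have hfin : Finite (CurveX3.W.Point) := Finite.of_surjective _ CurveX3.f_surj
  constructor
  · intro P
    exact isOfFinAddOrder_of_finite P
  · have hcard := Nat.card_eq_of_bijective _ hbij
    simpa using hcard.symm
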